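/- For every integer n ≥ 1, the image of the set X₂ = {z ∈ ℂ : |z| > 1} ∪ {∞} under the Möbius transformation B₂^n : z ↦ z/(2nz+1) is the open disc centered on the real axis whose boundary passes through the points 1/(2n+1) and 1/(2n-1); in particular B₂^n X₂ ⊆ {|z| < 1}. -/

import Mathlib

open OnePoint

/-- The matrix `A_λ = [[1,λ],[0,1]]` in `SL₂(ℂ)`. -/
def Amat (lam : ℂ) : Matrix.SpecialLinearGroup (Fin 2) ℂ :=
  ⟨!![1, lam; 0, 1], by simp [Matrix.det_fin_two_of]⟩

/-- The matrix `B_μ = [[1,0],[μ,1]]` in `SL₂(ℂ)`. -/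
def Bmat (mu : ℂ) : Matrix.SpecialLinearGroup (Fin 2) ℂ :=
  ⟨!![1, 0; mu, 1], by simp [Matrix.det_fin_two_of]⟩

/-- The action of `SL₂(ℂ)` on the extended complex plane `ℂ ∪ {∞}`
by Möbius transformations. -/
noncomputable def moebius (g : Matrix.SpecialLinearGroup (Fin 2) ℂ) (z : OnePoint ℂ) : OnePoint ℂ :=
  OnePoint.rec
    (if g.1 1 0 = 0 then ∞ else ((g.1 0 0 / g.1 1 0 : ℂ) : OnePoint ℂ))
    (fun w => if g.1 1 0 * w + g.1 1 1 = 0 then ∞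
      else (((g.1 0 0 * w + g.1 0 1) / (g.1 1 0 * w + g.1 1 1) : ℂ) : OnePoint ℂ)) z

/-!
`B₂ⁿ = B_{2n}`, and for `|c| ≥ 1` the map `z ↦ z/(cz+1)` sends `{|z| > 1} ∪ {∞}` bijectively onto
`{u : |1 - cu| < |u|}`: its inverse is `u ↦ u/(1 - cu)`, and `1 - c·z/(cz+1) = 1/(cz+1)`.
For real `c > 1` this Apollonius region is the disc with centre `c/(c²-1)` and radius `1/(c²-1)`,
which for `c = 2n` has diameter `[1/(2n+1), 1/(2n-1)]`. For `|c| ≥ 2` the region lies in the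
unit disc, since `|c||u| - 1 ≤ |1 - cu| < |u|`.
-/

theorem Bmat_mul_Bmat (a b : ℂ) : Bmat a * Bmat b = Bmat (a + b) := by
  apply Subtype.ext
  rw [Matrix.SpecialLinearGroup.coe_mul]
  simp [Bmat]

theorem Bmat_pow (μ : ℂ) (n : ℕ) : Bmat μ ^ n = Bmat (n * μ) := by
  induction n with
  | zero => rw [pow_zero]; apply Subtype.ext; simp [Bmat, Matrix.one_fin_two]
  | succ k ih => rw [pow_succ, ih, Bmat_mul_Bmat]; push_cast; ring_nf

theorem moebius_Bmat_coe {c w : ℂ} (hw : c * w + 1 ≠ 0) :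
    moebius (Bmat c) w = ↑(w / (c * w + 1)) := by
  change ite _ _ _ = _
  simp [Bmat, hw]

theorem moebius_Bmat_infty {c : ℂ} (hc : c ≠ 0) : moebius (Bmat c) ∞ = ↑(1 / c) := by
  change ite _ _ _ = _
  simp [Bmat, hc]

theorem mul_add_one_ne_zero_of_one_lt_norm {c w : ℂ} (hc : 1 ≤ ‖c‖) (hw : 1 < ‖w‖) :
    c * w + 1 ≠ 0 := by
  intro h
  have hnorm : ‖c * w‖ = 1 := by rw [eq_neg_of_add_eq_zero_left h, norm_neg, norm_one]
  rw [norm_mul] at hnorm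
  nlinarith [norm_nonneg w]

theorem norm_lt_one_of_norm_one_sub_mul_lt {c u : ℂ} (hc : 2 ≤ ‖c‖) (hu : ‖1 - c * u‖ < ‖u‖) :
    ‖u‖ < 1 := by
  have htri := norm_sub_norm_le (c * u) 1
  rw [norm_sub_rev, norm_mul, norm_one] at htri
  nlinarith [norm_nonneg u]

theorem norm_one_sub_mul_lt_iff {c : ℝ} (hc : 1 < c) (u : ℂ) :
    ‖1 - c * u‖ < ‖u‖ ↔ ‖u - ((c / (c ^ 2 - 1) : ℝ) : ℂ)‖ < 1 / (c ^ 2 - 1) := by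
  set a := c ^ 2 - 1 with ha
  have ha_pos : 0 < a := by nlinarith
  have key : ‖a * u - c‖ ^ 2 - 1 = a * (‖1 - c * u‖ ^ 2 - ‖u‖ ^ 2) := by
    simp only [Complex.sq_norm, Complex.normSq_apply, Complex.sub_re, Complex.sub_im,
      Complex.mul_re, Complex.mul_im, Complex.ofReal_re, Complex.ofReal_im, Complex.one_re,
      Complex.one_im, ha]
    ring
  have hscale : ‖u - ((c / a : ℝ) : ℂ)‖ = ‖a * u - c‖ / a := by
    have hfactor : (a : ℂ) * u - c = a * (u - ((c / a : ℝ) : ℂ)) := by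
      have : (a : ℂ) ≠ 0 := by exact_mod_cast ha_pos.ne'
      push_cast
      field_simp
    rw [hfactor, norm_mul, Complex.norm_real, Real.norm_of_nonneg ha_pos.le,
      mul_div_cancel_left₀ _ ha_pos.ne']
  rw [hscale, div_lt_div_iff_of_pos_right ha_pos, ← sq_lt_sq₀ (norm_nonneg _) (norm_nonneg _),
    ← sq_lt_one_iff₀ (norm_nonneg _), ← sub_neg, ← sub_neg (a := ‖a * u - c‖ ^ 2), key]
  exact ⟨mul_neg_of_pos_of_neg ha_pos, fun h => neg_of_mul_neg_right h ha_pos.le⟩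

theorem moebius_Bmat_image_exterior {c : ℂ} (hc : 1 ≤ ‖c‖) :
    moebius (Bmat c) '' (((↑) : ℂ → OnePoint ℂ) '' {z : ℂ | 1 < ‖z‖} ∪ {∞}) =
      ((↑) : ℂ → OnePoint ℂ) '' {u : ℂ | ‖1 - c * u‖ < ‖u‖} := by
  have hc0 : c ≠ 0 := norm_pos_iff.mp (by linarith)
  apply Set.Subset.antisymm
  · rintro _ ⟨_, ⟨w, hw, rfl⟩ | rfl, rfl⟩
    · have hden := mul_add_one_ne_zero_of_one_lt_norm hc hw
      refine ⟨w / (c * w + 1), ?_, (moebius_Bmat_coe hden).symm⟩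
      have hsub : 1 - c * (w / (c * w + 1)) = 1 / (c * w + 1) := by field_simp; ring
      rw [Set.mem_ofPred_eq, hsub, norm_div, norm_div, norm_one]
      exact div_lt_div_of_pos_right hw (norm_pos_iff.mpr hden)
    · refine ⟨1 / c, ?_, (moebius_Bmat_infty hc0).symm⟩
      rw [Set.mem_ofPred_eq, mul_one_div_cancel hc0, sub_self, norm_zero]
      exact norm_pos_iff.mpr (one_div_ne_zero hc0)
  · rintro _ ⟨u, hu, rfl⟩
    by_cases hpole : 1 - c * u = 0
    · refine ⟨∞, Or.inr rfl, ?_⟩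
      rw [moebius_Bmat_infty hc0, eq_one_div_of_mul_eq_one_right (sub_eq_zero.mp hpole).symm]
    · have hden : c * (u / (1 - c * u)) + 1 = 1 / (1 - c * u) := by field_simp; ring
      refine ⟨↑(u / (1 - c * u)), Or.inl ⟨_, ?_, rfl⟩, ?_⟩
      · rwa [Set.mem_ofPred_eq, norm_div, one_lt_div (norm_pos_iff.mpr hpole)]
      · rw [moebius_Bmat_coe (by rw [hden]; exact one_div_ne_zero hpole), hden,
          div_div_div_cancel_right₀ hpole, div_one]

theorem stmt_3 (n : ℕ) (hn : 1 ≤ n) :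
    moebius (Bmat 2 ^ n) ''
        (((↑) : ℂ → OnePoint ℂ) '' {z : ℂ | 1 < ‖z‖} ∪ {∞}) =
      ((↑) : ℂ → OnePoint ℂ) ''
        {w : ℂ | ‖w - ((1 / (2 * n + 1) + 1 / (2 * n - 1)) / 2 : ℝ)‖ <
          (1 / (2 * n - 1) - 1 / (2 * n + 1)) / 2} ∧
    ∀ z ∈ moebius (Bmat 2 ^ n) ''
        (((↑) : ℂ → OnePoint ℂ) '' {z : ℂ | 1 < ‖z‖} ∪ {∞}),
      ∃ u : ℂ, z = u ∧ ‖u‖ < 1 := by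
  set c : ℝ := 2 * n with hc_def
  have hc : 2 ≤ c := by rw [hc_def]; norm_cast; omega
  have hnorm : ‖(c : ℂ)‖ = c := Complex.norm_of_nonneg (by linarith)
  have hpow : Bmat 2 ^ n = Bmat c := by rw [Bmat_pow, hc_def]; push_cast; ring_nf
  have hc_sub : c - 1 ≠ 0 := by linarith
  have hc_add : c + 1 ≠ 0 := by linarith
  have hc_sq : c ^ 2 - 1 ≠ 0 := by nlinarith
  have hcenter : (1 / (c + 1) + 1 / (c - 1)) / 2 = c / (c ^ 2 - 1) := by
    field_simp; ring
  have hradius : (1 / (c - 1) - 1 / (c + 1)) / 2 = 1 / (c ^ 2 - 1) := by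
    field_simp; ring
  rw [hpow, moebius_Bmat_image_exterior (by rw [hnorm]; linarith)]
  refine ⟨?_, ?_⟩
  · rw [hcenter, hradius]
    congr 1
    ext u
    exact norm_one_sub_mul_lt_iff (by linarith) u
  · rintro _ ⟨u, hu, rfl⟩
    exact ⟨u, rfl, norm_lt_one_of_norm_one_sub_mul_lt (by rw [hnorm]; exact hc) hu⟩
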